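/- arXiv:2410.03957 — 2 statements merged into one kernel-verified Lean document; each statement's English description precedes it below -/
import Mathlib

section
/- For every integer n ≥ 1, the series ∑_{k≥0} k² / [k² − (n−1/2)²]² equals π²/4. -/
open Real Filter Finset Topology

/-! With `a = n - 1/2`, partial fractions give
`k² / (k² - a²)² = (1/(k-a)² + 1/(k+a)²) / 4 + (1/(k-a) - 1/(k+a)) / (4a)`.
The numbers `k ∓ a` run over half-integers, so the squared terms reduce to the odd part of the
Basel sum, `∑ 1/(j+1/2)² = π²/2`, and together contribute `π² + 1/a²`. The second series
telescopes because `k + a = (k + 2a) - a`; it sums to `∑_{k<2a} 1/(k-a) = -1/a`, the values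
`k - a` being symmetric about `0` apart from `-a`. -/

theorem hasSum_one_div_add_half_sq :
    HasSum (fun j : ℕ => 1 / ((j : ℝ) + 1 / 2) ^ 2) (π ^ 2 / 2) := by
  set f : ℕ → ℝ := fun k => 4 * (1 / (k : ℝ) ^ 2)
  have hf : HasSum f (4 * (π ^ 2 / 6)) := hasSum_zeta_two.mul_left 4
  have heven : HasSum (fun j => f (2 * j)) (π ^ 2 / 6) := by
    convert hasSum_zeta_two using 2 with j
    simp only [f]
    push_cast
    rw [mul_pow]
    ring
  have hodd : (fun j => f (2 * j + 1)) = fun j : ℕ => 1 / ((j : ℝ) + 1 / 2) ^ 2 := by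
    funext j
    simp only [f]
    push_cast
    field_simp
    ring
  have hodd_summable : Summable fun j => f (2 * j + 1) :=
    hf.summable.comp_injective fun i j hij => by omega
  have hsplit := (heven.even_add_odd hodd_summable.hasSum).unique hf
  rw [← hodd]
  convert hodd_summable.hasSum using 1
  linarith

theorem hasSum_sub_comp_add_of_tendsto_zero {G : Type*} [AddCommGroup G] [TopologicalSpace G]
    [IsTopologicalAddGroup G] [T2Space G] {f : ℕ → G} (hf : Tendsto f atTop (𝓝 0)) (m : ℕ)
    (hs : Summable fun k => f k - f (k + m)) :
    HasSum (fun k => f k - f (k + m)) (∑ k ∈ range m, f k) := by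
  have hpartial : ∀ N, ∑ k ∈ range N, (f k - f (k + m))
      = ∑ k ∈ range m, f k - ∑ i ∈ range m, f (N + i) := by
    intro N
    rw [sum_sub_distrib, sub_eq_sub_iff_add_eq_add, ← sum_range_add]
    simp_rw [add_comm _ m]
    rw [sum_range_add]
  have htail : Tendsto (fun N => ∑ i ∈ range m, f (N + i)) atTop (𝓝 0) := by
    simpa using tendsto_finsetSum (range m) fun i _ => hf.comp (tendsto_add_atTop_nat i)
  rw [hs.hasSum_iff_tendsto_nat]
  simpa [hpartial] using tendsto_const_nhds.sub htail

theorem sum_range_comp_sub_half_eq_zero {G : Type*} [AddCommGroup G] [IsAddTorsionFree G]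
    {g : ℝ → G} (hg : ∀ x, g (-x) = -g x) (N : ℕ) :
    ∑ k ∈ range N, g (k - (N - 1) / 2) = 0 := by
  rw [← self_eq_neg]
  calc ∑ k ∈ range N, g (k - (N - 1) / 2)
      = ∑ k ∈ range N, g ((N - 1 - k : ℕ) - (N - 1) / 2) :=
        (sum_range_reflect (fun k => g (k - (N - 1) / 2)) N).symm
    _ = -∑ k ∈ range N, g (k - (N - 1) / 2) := by
      rw [← sum_neg_distrib]
      refine sum_congr rfl fun k hk => ?_
      rw [mem_range] at hk
      rw [← hg, Nat.cast_sub (by omega), Nat.cast_sub (by omega)]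
      push_cast
      ring_nf

theorem sum_range_one_div_sub_half (m : ℕ) :
    ∑ k ∈ range (2 * m + 1), 1 / ((k : ℝ) - (m + 1 / 2)) = -(1 / (m + 1 / 2)) := by
  have h := sum_range_comp_sub_half_eq_zero (g := fun x : ℝ => 1 / x) one_div_neg_eq_neg_one_div
    (2 * m + 2)
  rw [sum_range_succ] at h
  have hc : (((2 * m + 2 : ℕ) : ℝ) - 1) / 2 = m + 1 / 2 := by push_cast; ring
  rw [hc] at h
  rw [eq_neg_iff_add_eq_zero, ← h]
  congr 2
  push_cast
  ring

theorem natCast_ne_natCast_add_half (k m : ℕ) : (k : ℝ) ≠ m + 1 / 2 := by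
  intro h
  have h2 : ((2 * k : ℕ) : ℝ) = (2 * m + 1 : ℕ) := by push_cast; linarith
  exact_mod_cast (by omega : 2 * k ≠ 2 * m + 1) (Nat.cast_injective h2)

theorem hasSum_one_div_add_nat_add_half_sq (m : ℕ) :
    HasSum (fun k : ℕ => 1 / ((k : ℝ) + (m + 1 / 2)) ^ 2)
      (π ^ 2 / 2 - ∑ j ∈ range m, 1 / ((j : ℝ) + 1 / 2) ^ 2) :=
  ((hasSum_nat_add_iff (f := fun j : ℕ => 1 / ((j : ℝ) + 1 / 2) ^ 2) m).mpr
    (by rw [sub_add_cancel]; exact hasSum_one_div_add_half_sq)).congr_fun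
    fun k => by push_cast; ring_nf

theorem hasSum_one_div_sub_nat_sub_half_sq (m : ℕ) :
    HasSum (fun k : ℕ => 1 / ((k : ℝ) - (m + 1 / 2)) ^ 2)
      (π ^ 2 / 2 + ∑ j ∈ range (m + 1), 1 / ((j : ℝ) + 1 / 2) ^ 2) := by
  have hhead : ∑ j ∈ range (m + 1), 1 / ((j : ℝ) + 1 / 2) ^ 2
      = ∑ k ∈ range (m + 1), 1 / ((k : ℝ) - (m + 1 / 2)) ^ 2 := by
    rw [← sum_range_reflect]
    refine sum_congr rfl fun j hj => ?_
    rw [mem_range] at hj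
    rw [Nat.add_sub_cancel, Nat.cast_sub (by omega)]
    ring_nf
  rw [hhead, ← hasSum_nat_add_iff]
  exact hasSum_one_div_add_half_sq.congr_fun fun k => by push_cast; ring_nf

theorem hasSum_one_div_sub_sq_add_one_div_add_sq (m : ℕ) :
    HasSum (fun k : ℕ => 1 / ((k : ℝ) - (m + 1 / 2)) ^ 2 + 1 / ((k : ℝ) + (m + 1 / 2)) ^ 2)
      (π ^ 2 + 1 / (m + 1 / 2) ^ 2) := by
  convert (hasSum_one_div_sub_nat_sub_half_sq m).add (hasSum_one_div_add_nat_add_half_sq m) using 1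
  rw [sum_range_succ]
  ring

theorem abs_one_div_sub_sub_one_div_add_le {x a : ℝ} (ha : 0 ≤ a) (h₁ : x - a ≠ 0)
    (h₂ : x + a ≠ 0) :
    |1 / (x - a) - 1 / (x + a)| ≤ a * (1 / (x - a) ^ 2 + 1 / (x + a) ^ 2) := by
  have hid : 1 / (x - a) - 1 / (x + a) = a * (2 * (1 / (x - a)) * (1 / (x + a))) := by
    field_simp
    ring
  rw [hid, abs_mul, abs_of_nonneg ha, abs_mul, abs_mul, abs_two]
  gcongr
  simpa only [sq_abs, div_pow, one_pow] using two_mul_le_add_sq |1 / (x - a)| |1 / (x + a)|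

theorem hasSum_one_div_sub_sub_one_div_add (m : ℕ) :
    HasSum (fun k : ℕ => 1 / ((k : ℝ) - (m + 1 / 2)) - 1 / ((k : ℝ) + (m + 1 / 2)))
      (-(1 / (m + 1 / 2))) := by
  set f : ℕ → ℝ := fun k => 1 / ((k : ℝ) - (m + 1 / 2))
  have hshift : ∀ k, f (k + (2 * m + 1)) = 1 / ((k : ℝ) + (m + 1 / 2)) := by
    intro k
    simp only [f]
    push_cast
    ring_nf
  have hf : Tendsto f atTop (𝓝 0) :=
    tendsto_const_nhds.div_atTop (tendsto_atTop_add_const_right _ _ tendsto_natCast_atTop_atTop)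
  have hs : Summable fun k => f k - f (k + (2 * m + 1)) := by
    simp_rw [hshift]
    refine ((hasSum_one_div_sub_sq_add_one_div_add_sq m).summable.mul_left
      ((m : ℝ) + 1 / 2)).of_norm_bounded fun k => ?_
    exact abs_one_div_sub_sub_one_div_add_le (by positivity)
      (sub_ne_zero.2 (natCast_ne_natCast_add_half k m)) (by positivity)
  have h := hasSum_sub_comp_add_of_tendsto_zero hf (2 * m + 1) hs
  simp_rw [hshift, f, sum_range_one_div_sub_half] at h
  exact h

theorem sq_div_sq_sub_sq_sq {K : Type*} [Field K] [CharZero K] {x a : K} (ha : a ≠ 0)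
    (h₁ : x - a ≠ 0) (h₂ : x + a ≠ 0) :
    x ^ 2 / (x ^ 2 - a ^ 2) ^ 2
      = (1 / (x - a) ^ 2 + 1 / (x + a) ^ 2) / 4 + (1 / (x - a) - 1 / (x + a)) / (4 * a) := by
  rw [show x ^ 2 - a ^ 2 = (x - a) * (x + a) by ring]
  field_simp
  ring

theorem stmt2 (n : ℕ) (hn : 1 ≤ n) :
    ∑' k : ℕ, (k : ℝ) ^ 2 / ((k : ℝ) ^ 2 - ((n : ℝ) - 1 / 2) ^ 2) ^ 2
      = π ^ 2 / 4 := by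
  obtain ⟨m, rfl⟩ : ∃ m, n = m + 1 := ⟨n - 1, by omega⟩
  have ha : ((m + 1 : ℕ) : ℝ) - 1 / 2 = m + 1 / 2 := by push_cast; ring
  have hterm : ∀ k : ℕ, (k : ℝ) ^ 2 / ((k : ℝ) ^ 2 - (m + 1 / 2) ^ 2) ^ 2
      = (1 / ((k : ℝ) - (m + 1 / 2)) ^ 2 + 1 / ((k : ℝ) + (m + 1 / 2)) ^ 2) / 4
        + (1 / ((k : ℝ) - (m + 1 / 2)) - 1 / ((k : ℝ) + (m + 1 / 2))) / (4 * (m + 1 / 2)) :=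
    fun k => sq_div_sq_sub_sq_sq (by positivity) (sub_ne_zero.2 (natCast_ne_natCast_add_half k m))
      (by positivity)
  rw [ha, tsum_congr hterm, (((hasSum_one_div_sub_sq_add_one_div_add_sq m).div_const 4).add
    ((hasSum_one_div_sub_sub_one_div_add m).div_const _)).tsum_eq]
  field_simp
  ring
end

section
/- For every integer n ≥ 1, the series ∑_{k≥0} 1 / [(2k+1)² − 4n²]² equals π²/(64 n²). -/
open Real

open Finset in
lemma odd_basel : HasSum (fun k : ℕ => 1 / (2 * (k:ℝ) + 1) ^ 2) (π ^ 2 / 8) := by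
  have h := hasSum_zeta_two
  have he : HasSum (fun k : ℕ => (1:ℝ) / ((2 * (k:ℝ)) ^ 2)) (π ^ 2 / 24) := by
    have h4 := h.mul_left (1/4 : ℝ)
    have heq : (1/4 : ℝ) * (π ^ 2 / 6) = π ^ 2 / 24 := by ring
    rw [heq] at h4
    refine h4.congr_fun fun k => ?_
    rw [div_mul_div_comm, one_mul]
    congr 1
    ring
  have hsumm : Summable (fun k : ℕ => 1 / (2 * (k:ℝ) + 1) ^ 2) := by
    have hinj : Function.Injective (fun k : ℕ => 2 * k + 1) := by
      intro a b hab; simp only [] at hab; omega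
    have := h.summable.comp_injective hinj
    refine this.congr fun k => ?_
    simp only [Function.comp]
    congr 1
    push_cast
    ring
  have ho := hsumm.hasSum
  have hcomb : HasSum (fun k : ℕ => (1:ℝ) / (k:ℝ) ^ 2)
      (π ^ 2 / 24 + ∑' k : ℕ, 1 / (2 * (k:ℝ) + 1) ^ 2) := by
    apply HasSum.even_add_odd
    · refine he.congr_fun fun k => ?_
      congr 1
      push_cast; ring
    · refine ho.congr_fun fun k => ?_
      congr 1
      push_cast; ring
  have huniq := hcomb.unique h
  have key : ∑' k : ℕ, 1 / (2 * (k:ℝ) + 1) ^ 2 = π ^ 2 / 8 := by linarith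
  rwa [key] at ho

theorem stmt3 (n : ℕ) (hn : 1 ≤ n) :
    ∑' k : ℕ, 1 / ((2 * (k : ℝ) + 1) ^ 2 - 4 * (n : ℝ) ^ 2) ^ 2
      = π ^ 2 / (64 * (n : ℝ) ^ 2) := by
  classical
  have hn0 : (0:ℝ) < (n:ℝ) := by exact_mod_cast hn
  have hnne : (n:ℝ) ≠ 0 := ne_of_gt hn0
  have hsub : ∀ k : ℕ, 2 * (k:ℝ) + 1 - 2 * n ≠ 0 := by
    intro k hk
    have h1 : (2 * k + 1 : ℕ) = (2 * n : ℕ) := by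
      have : (2 * (k:ℝ) + 1) = 2 * n := by linarith
      exact_mod_cast this
    omega
  have hadd : ∀ k : ℕ, (0:ℝ) < 2 * (k:ℝ) + 1 + 2 * n := by
    intro k; positivity
  have haddne : ∀ k : ℕ, 2 * (k:ℝ) + 1 + 2 * n ≠ 0 := fun k => ne_of_gt (hadd k)
  set u : ℕ → ℝ := fun k => 1 / (2 * (k:ℝ) + 1 - 2 * n) with hu
  set w : ℕ → ℝ := fun k => 1 / (2 * (k:ℝ) + 1 + 2 * n) with hw
  set g1 : ℕ → ℝ := fun k => 1 / (2 * (k:ℝ) + 1 - 2 * n) ^ 2 with hg1def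
  set g2 : ℕ → ℝ := fun k => 1 / (2 * (k:ℝ) + 1 + 2 * n) ^ 2 with hg2def
  set hF : ℕ → ℝ := fun k => u k - w k with hhdef
  set S : ℝ := ∑ j ∈ Finset.range n, 1 / (2 * (j:ℝ) + 1) ^ 2 with hS
  -- sum of g2
  have hg2 : HasSum g2 (π ^ 2 / 8 - S) := by
    have h2 := (hasSum_nat_add_iff' (f := fun k : ℕ => 1 / (2 * (k:ℝ) + 1) ^ 2) n).mpr odd_basel
    refine h2.congr_fun fun k => ?_
    simp only [g2]
    congr 1
    push_cast
    ring
  -- finite reflected sum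
  have hfin1 : ∑ i ∈ Finset.range n, g1 i = S := by
    rw [hS, ← Finset.sum_range_reflect (fun j => 1 / (2 * (j:ℝ) + 1) ^ 2) n]
    refine Finset.sum_congr rfl fun i hi => ?_
    have hi' : i < n := Finset.mem_range.mp hi
    obtain ⟨m, hm⟩ : ∃ m, n - 1 - i = m ∧ n = i + m + 1 := ⟨n - 1 - i, rfl, by omega⟩
    simp only [hg1def, hm.1]
    have hcast : (n:ℝ) = (i:ℝ) + m + 1 := by exact_mod_cast congrArg (Nat.cast : ℕ → ℝ) hm.2
    rw [hcast]
    congr 1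
    ring
  -- sum of g1
  have hg1 : HasSum g1 (π ^ 2 / 8 + S) := by
    rw [← hfin1]
    refine (hasSum_nat_add_iff (f := g1) n).mp ?_
    refine odd_basel.congr_fun fun k => ?_
    simp only [hg1def]
    congr 1
    push_cast
    ring
  -- summability of hF
  have hFsumm : Summable hF := by
    rw [← summable_abs_iff]
    have hbound : ∀ k, |hF k| ≤ 2 * n * (g1 k + g2 k) := by
      intro k
      have hprod : hF k = 4 * n * (u k * w k) := by
        have hs := hsub k
        have ha := haddne k
        simp only [hhdef, hu, hw]
        field_simp
        ring
      rw [hprod]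
      have h1 : |4 * (n:ℝ) * (u k * w k)| = 2 * n * (2 * (|u k| * |w k|)) := by
        rw [abs_mul (4 * (n:ℝ)) (u k * w k), abs_mul (u k) (w k),
          abs_of_pos (show (0:ℝ) < 4 * (n:ℝ) by positivity)]
        ring
      rw [h1]
      have h2 : 2 * (|u k| * |w k|) ≤ |u k| ^ 2 + |w k| ^ 2 := by
        nlinarith [sq_nonneg (|u k| - |w k|)]
      have h3 : |u k| ^ 2 + |w k| ^ 2 = g1 k + g2 k := by
        simp only [g1, g2, u, w, sq_abs]
        rw [div_pow, div_pow, one_pow]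
      calc 2 * (n:ℝ) * (2 * (|u k| * |w k|)) ≤ 2 * n * (|u k| ^ 2 + |w k| ^ 2) := by
            apply mul_le_mul_of_nonneg_left h2 (by positivity)
        _ = 2 * n * (g1 k + g2 k) := by rw [h3]
    apply Summable.of_nonneg_of_le (fun k => abs_nonneg _) hbound
    exact ((hg1.add hg2).summable).mul_left _
  -- partial sums of hF telescope
  have htel : ∀ K : ℕ, ∑ k ∈ Finset.range K, hF k
      = ∑ j ∈ Finset.range (2 * n), u j - ∑ j ∈ Finset.range (2 * n), u (K + j) := by
    intro K
    have hshift : ∀ k : ℕ, w k = u (k + 2 * n) := by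
      intro k
      simp only [hu, hw]
      congr 1
      push_cast
      ring
    have hsplit1 : ∑ i ∈ Finset.range (2 * n + K), u i
        = ∑ i ∈ Finset.range (2 * n), u i + ∑ k ∈ Finset.range K, u (2 * n + k) :=
      Finset.sum_range_add u (2 * n) K
    have hsplit2 : ∑ i ∈ Finset.range (K + 2 * n), u i
        = ∑ i ∈ Finset.range K, u i + ∑ j ∈ Finset.range (2 * n), u (K + j) :=
      Finset.sum_range_add u K (2 * n)
    rw [add_comm (2 * n) K] at hsplit1
    have hsum : ∑ k ∈ Finset.range K, hF k
        = ∑ k ∈ Finset.range K, u k - ∑ k ∈ Finset.range K, u (2 * n + k) := by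
      rw [← Finset.sum_sub_distrib]
      refine Finset.sum_congr rfl fun k _ => ?_
      simp only [hF]
      rw [hshift k, add_comm k (2 * n)]
    rw [hsum]
    linarith [hsplit1, hsplit2]
  -- tail sum tends to zero
  have htail : Filter.Tendsto (fun K : ℕ => ∑ j ∈ Finset.range (2 * n), u (K + j))
      Filter.atTop (nhds 0) := by
    have : ∀ j ∈ Finset.range (2 * n), Filter.Tendsto (fun K : ℕ => u (K + j))
        Filter.atTop (nhds 0) := by
      intro j _
      have hd : Filter.Tendsto (fun K : ℕ => 2 * ((K:ℝ) + j) + 1 - 2 * n)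
          Filter.atTop Filter.atTop := by
        have heq : (fun K : ℕ => 2 * ((K:ℝ) + j) + 1 - 2 * n)
            = fun K : ℕ => 2 * (K:ℝ) + (2 * j + 1 - 2 * n) := by funext K; ring
        rw [heq]
        apply Filter.tendsto_atTop_add_const_right
        exact Filter.Tendsto.const_mul_atTop (by norm_num : (0:ℝ) < 2)
          tendsto_natCast_atTop_atTop
      have hc := tendsto_inv_atTop_zero.comp hd
      refine hc.congr fun K => ?_
      simp only [Function.comp, hu, one_div]
      congr 1
      push_cast
      ring
    have h0 := tendsto_finset_sum (Finset.range (2 * n)) this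
    simpa using h0
  -- first finite sum is zero
  have hzero : ∑ j ∈ Finset.range (2 * n), u j = 0 := by
    have hrefl := Finset.sum_range_reflect u (2 * n)
    have hneg : ∑ j ∈ Finset.range (2 * n), u (2 * n - 1 - j)
        = ∑ j ∈ Finset.range (2 * n), (- u j) := by
      refine Finset.sum_congr rfl fun j hj => ?_
      have hj' : j < 2 * n := Finset.mem_range.mp hj
      obtain ⟨m, hm1, hm2⟩ : ∃ m, 2 * n - 1 - j = m ∧ 2 * n = j + m + 1 :=
        ⟨2 * n - 1 - j, rfl, by omega⟩
      rw [hm1]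
      simp only [hu]
      have hcast : 2 * (n:ℝ) = (j:ℝ) + m + 1 := by exact_mod_cast congrArg (Nat.cast : ℕ → ℝ) hm2
      have hab : 2 * (m:ℝ) + 1 - 2 * (n:ℝ) = -(2 * (j:ℝ) + 1 - 2 * (n:ℝ)) := by linarith
      rw [hab, div_neg]
    rw [hneg, Finset.sum_neg_distrib] at hrefl
    linarith
  -- HasSum hF 0
  have hHF : HasSum hF 0 := by
    have h1 := hFsumm.hasSum
    have h2 := h1.tendsto_sum_nat
    have h3 : Filter.Tendsto (fun K : ℕ => ∑ k ∈ Finset.range K, hF k)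
        Filter.atTop (nhds 0) := by
      have : (fun K : ℕ => ∑ k ∈ Finset.range K, hF k)
          = fun K : ℕ => (0 : ℝ) - ∑ j ∈ Finset.range (2 * n), u (K + j) := by
        funext K; rw [htel K, hzero]
      rw [this]
      simpa using (tendsto_const_nhds (x := (0:ℝ))).sub htail
    have := tendsto_nhds_unique h2 h3
    rwa [this] at h1
  -- combine everything
  have hmain : HasSum (fun k : ℕ => 1 / ((2 * (k : ℝ) + 1) ^ 2 - 4 * (n : ℝ) ^ 2) ^ 2)
      (π ^ 2 / (64 * (n : ℝ) ^ 2)) := by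
    have hcomb := ((hg1.add hg2).sub (hHF.mul_left (1 / (2 * (n:ℝ))))).mul_left
      (1 / (16 * (n:ℝ) ^ 2))
    have hval : 1 / (16 * (n:ℝ) ^ 2) * (π ^ 2 / 8 + S + (π ^ 2 / 8 - S)
        - 1 / (2 * (n:ℝ)) * 0) = π ^ 2 / (64 * (n : ℝ) ^ 2) := by
      field_simp
      ring
    rw [hval] at hcomb
    refine hcomb.congr_fun fun k => ?_
    simp only [g1, g2, hF, u, w]
    have h1 := hsub k
    have h2 := haddne k
    have h3 : (2 * (k:ℝ) + 1) ^ 2 - 4 * (n:ℝ) ^ 2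
        = (2 * (k:ℝ) + 1 - 2 * n) * (2 * (k:ℝ) + 1 + 2 * n) := by ring
    rw [h3]
    field_simp
    ring
  exact hmain.tsum_eq
end
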